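/- Let P, Q, R, S : ℂ → ℂ be arbitrary entire functions and define the defect functions Δ_P(w) = e^w·P′(w) − (μ + (ℓ−1)e^w)·P(w) + Q(w) − e^{2w}·R(w); Δ_Q(w) = Q′(w) − e^w·((λ − (ℓ+1)μe^w)·P(w) + μ·Q(w) + S(w)); Δ_R(w) = e^w·R′(w) + (λ+μ²)·P(w) − e^w·(2(ℓ−1) − μe^w)·R(w) + S(w); Δ_S(w) = e^w·S′(w) + (λ+μ²)·Q(w) − e^{2w}·(λ − (ℓ+1)μe^w)·R(w) − ((ℓ−1)e^w − μ)·S(w); and set 𝔇(w) = e^{2(1−ℓ)w}·(P(w)·S(w) − Q(w)·R(w)). Then the identity 𝔇′(w) = e^{(1−2ℓ)w}·(S(w)·Δ_P(w) − e^w·R(w)·Δ_Q(w) − Q(w)·Δ_R(w) + P(w)·Δ_S(w)) holds for every w ∈ ℂ. In particular, if P,Q,R,S is a pqrs-quad (all four defects vanish identically), then 𝔇 is constant. -/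

import Mathlib

noncomputable def delP (ell lam mu : ℂ) (P Q R S : ℂ → ℂ) : ℂ → ℂ := fun w =>
  Complex.exp w * deriv P w - (mu + (ell - 1) * Complex.exp w) * P w + Q w -
    Complex.exp (2 * w) * R w

noncomputable def delQ (ell lam mu : ℂ) (P Q R S : ℂ → ℂ) : ℂ → ℂ := fun w =>
  deriv Q w - Complex.exp w * ((lam - (ell + 1) * mu * Complex.exp w) * P w + mu * Q w + S w)

noncomputable def delR (ell lam mu : ℂ) (P Q R S : ℂ → ℂ) : ℂ → ℂ := fun w =>
  Complex.exp w * deriv R w + (lam + mu ^ 2) * P w -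
    Complex.exp w * (2 * (ell - 1) - mu * Complex.exp w) * R w + S w

noncomputable def delS (ell lam mu : ℂ) (P Q R S : ℂ → ℂ) : ℂ → ℂ := fun w =>
  Complex.exp w * deriv S w + (lam + mu ^ 2) * Q w -
    Complex.exp (2 * w) * (lam - (ell + 1) * mu * Complex.exp w) * R w -
    ((ell - 1) * Complex.exp w - mu) * S w

noncomputable def dfrak (ell : ℂ) (P Q R S : ℂ → ℂ) : ℂ → ℂ := fun w =>
  Complex.exp (2 * (1 - ell) * w) * (P w * S w - Q w * R w)

/-! By the product rule 𝔇′ = e^{2(1−ℓ)w}·(2(1−ℓ)(PS − QR) + P′S + PS′ − Q′R − QR′). Each of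
P′, Q′, R′, S′ is determined by its defect; after substituting these expressions (and
e^{2(1−ℓ)w} = e^{(1−2ℓ)w}·e^w) every term not containing a defect cancels, so 𝔇′ vanishes
on a pqrs-quad. -/

theorem hasDerivAt_dfrak {ell : ℂ} {P Q R S : ℂ → ℂ} {w : ℂ}
    (hP : DifferentiableAt ℂ P w) (hQ : DifferentiableAt ℂ Q w)
    (hR : DifferentiableAt ℂ R w) (hS : DifferentiableAt ℂ S w) :
    HasDerivAt (dfrak ell P Q R S)
      (2 * (1 - ell) * Complex.exp (2 * (1 - ell) * w) * (P w * S w - Q w * R w) +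
        Complex.exp (2 * (1 - ell) * w) *
          (deriv P w * S w + P w * deriv S w - (deriv Q w * R w + Q w * deriv R w))) w := by
  have hexp : HasDerivAt (fun w : ℂ => Complex.exp (2 * (1 - ell) * w))
      (2 * (1 - ell) * Complex.exp (2 * (1 - ell) * w)) w := by
    simpa [mul_comm] using ((hasDerivAt_id w).const_mul (2 * (1 - ell))).cexp
  exact hexp.mul ((hP.hasDerivAt.mul hS.hasDerivAt).sub (hQ.hasDerivAt.mul hR.hasDerivAt))

theorem deriv_dfrak {ell lam mu : ℂ} {P Q R S : ℂ → ℂ} {w : ℂ}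
    (hP : DifferentiableAt ℂ P w) (hQ : DifferentiableAt ℂ Q w)
    (hR : DifferentiableAt ℂ R w) (hS : DifferentiableAt ℂ S w) :
    deriv (dfrak ell P Q R S) w =
      Complex.exp ((1 - 2 * ell) * w) *
        (S w * delP ell lam mu P Q R S w -
          Complex.exp w * R w * delQ ell lam mu P Q R S w -
          Q w * delR ell lam mu P Q R S w +
          P w * delS ell lam mu P Q R S w) := by
  have exp_split : Complex.exp (2 * (1 - ell) * w) =
      Complex.exp ((1 - 2 * ell) * w) * Complex.exp w := by
    rw [← Complex.exp_add]; ring_nf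
  have exp_two_mul : Complex.exp (2 * w) = Complex.exp w * Complex.exp w := by
    rw [← Complex.exp_add]; ring_nf
  rw [(hasDerivAt_dfrak hP hQ hR hS).deriv]
  simp only [delP, delQ, delR, delS, exp_split, exp_two_mul]
  ring

theorem dfrak_eq_of_defects_eq_zero {ell lam mu : ℂ} {P Q R S : ℂ → ℂ}
    (hP : Differentiable ℂ P) (hQ : Differentiable ℂ Q)
    (hR : Differentiable ℂ R) (hS : Differentiable ℂ S)
    (hdef : ∀ w : ℂ, delP ell lam mu P Q R S w = 0 ∧ delQ ell lam mu P Q R S w = 0 ∧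
        delR ell lam mu P Q R S w = 0 ∧ delS ell lam mu P Q R S w = 0)
    (w z : ℂ) :
    dfrak ell P Q R S w = dfrak ell P Q R S z := by
  have hdiff : Differentiable ℂ (dfrak ell P Q R S) := fun w =>
    (hasDerivAt_dfrak (hP w) (hQ w) (hR w) (hS w)).differentiableAt
  refine is_const_of_deriv_eq_zero hdiff (fun w => ?_) w z
  obtain ⟨hΔP, hΔQ, hΔR, hΔS⟩ := hdef w
  rw [deriv_dfrak (lam := lam) (mu := mu) (hP w) (hQ w) (hR w) (hS w), hΔP, hΔQ, hΔR, hΔS]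
  ring

theorem statement_18 (ell lam mu : ℂ) (P Q R S : ℂ → ℂ)
    (hP : Differentiable ℂ P) (hQ : Differentiable ℂ Q)
    (hR : Differentiable ℂ R) (hS : Differentiable ℂ S) :
    (∀ w : ℂ,
      deriv (dfrak ell P Q R S) w =
        Complex.exp ((1 - 2 * ell) * w) *
          (S w * delP ell lam mu P Q R S w -
            Complex.exp w * R w * delQ ell lam mu P Q R S w -
            Q w * delR ell lam mu P Q R S w +
            P w * delS ell lam mu P Q R S w)) ∧
    ((∀ w : ℂ, delP ell lam mu P Q R S w = 0 ∧ delQ ell lam mu P Q R S w = 0 ∧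
        delR ell lam mu P Q R S w = 0 ∧ delS ell lam mu P Q R S w = 0) →
      ∀ w : ℂ, dfrak ell P Q R S w = dfrak ell P Q R S 0) :=
  ⟨fun w => deriv_dfrak (hP w) (hQ w) (hR w) (hS w),
    fun hdef w => dfrak_eq_of_defects_eq_zero hP hQ hR hS hdef w 0⟩
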